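/- arXiv:1406.7855 — 7 statements merged into one kernel-verified Lean document; each statement's English description precedes it below -/
import Mathlib

section
/- Let p > 2 and let X be a real random variable with E|X|^p < ∞ and EX = 0. Then E[X₊^{p/2}] ≤ (E[X₊^p])^{(p-2)/(2p-2)} · (E|X|/2)^{p/(2p-2)}, where X₊ = max(X,0). -/
/-!
Since `p / 2 = a * p + b * 1` with `a = (p - 2) / (2p - 2)` and `b = p / (2p - 2)` summing to one,
Hölder's inequality with exponents `1 / a`, `1 / b` (log-convexity of moments) bounds
`E[X₊^(p/2)]` by `(E[X₊^p])^a * (E[X₊])^b`, and `EX = 0` gives `E[X₊] = E|X| / 2`.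
-/

open MeasureTheory

section

variable {α : Type*} [MeasurableSpace α] {μ : Measure α}

theorem integral_rpow_mul_rpow_le {f g : α → ℝ} (hf : 0 ≤ᵐ[μ] f) (hg : 0 ≤ᵐ[μ] g)
    (hfi : Integrable f μ) (hgi : Integrable g μ) {a b : ℝ} (ha : 0 ≤ a) (hb : 0 ≤ b)
    (hab : a + b = 1) :
    ∫ x, f x ^ a * g x ^ b ∂μ ≤ (∫ x, f x ∂μ) ^ a * (∫ x, g x ∂μ) ^ b := by
  have hfg : 0 ≤ᵐ[μ] fun x => f x ^ a * g x ^ b := by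
    filter_upwards [hf, hg] with x hfx hgx
    exact mul_nonneg (Real.rpow_nonneg hfx a) (Real.rpow_nonneg hgx b)
  have hofReal : (fun x => ENNReal.ofReal (f x ^ a * g x ^ b)) =ᵐ[μ]
      fun x => ENNReal.ofReal (f x) ^ a * ENNReal.ofReal (g x) ^ b := by
    filter_upwards [hf, hg] with x hfx hgx
    rw [ENNReal.ofReal_rpow_of_nonneg hfx ha, ENNReal.ofReal_rpow_of_nonneg hgx hb,
      ← ENNReal.ofReal_mul (Real.rpow_nonneg hfx a)]
  have hfi0 : 0 ≤ ∫ x, f x ∂μ := integral_nonneg_of_ae hf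
  have hgi0 : 0 ≤ ∫ x, g x ∂μ := integral_nonneg_of_ae hg
  rw [integral_eq_lintegral_of_nonneg_ae hfg
    ((hfi.aemeasurable.pow_const a).mul (hgi.aemeasurable.pow_const b)).aestronglyMeasurable]
  refine ENNReal.toReal_le_of_le_ofReal (by positivity) ?_
  calc ∫⁻ x, ENNReal.ofReal (f x ^ a * g x ^ b) ∂μ
      = ∫⁻ x, ENNReal.ofReal (f x) ^ a * ENNReal.ofReal (g x) ^ b ∂μ := lintegral_congr_ae hofReal
    _ ≤ (∫⁻ x, ENNReal.ofReal (f x) ∂μ) ^ a * (∫⁻ x, ENNReal.ofReal (g x) ∂μ) ^ b :=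
      ENNReal.lintegral_mul_norm_pow_le hfi.aemeasurable.ennreal_ofReal
        hgi.aemeasurable.ennreal_ofReal ha hb hab
    _ = ENNReal.ofReal ((∫ x, f x ∂μ) ^ a * (∫ x, g x ∂μ) ^ b) := by
      rw [← ofReal_integral_eq_lintegral_ofReal hfi hf, ← ofReal_integral_eq_lintegral_ofReal hgi hg,
        ENNReal.ofReal_rpow_of_nonneg hfi0 ha, ENNReal.ofReal_rpow_of_nonneg hgi0 hb,
        ← ENNReal.ofReal_mul (by positivity)]

theorem integral_rpow_mul_add_mul_le {f : α → ℝ} (hf : 0 ≤ᵐ[μ] f) {q r a b : ℝ}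
    (hq : 0 ≤ q) (hr : 0 ≤ r) (hfq : Integrable (fun x => f x ^ q) μ)
    (hfr : Integrable (fun x => f x ^ r) μ) (ha : 0 ≤ a) (hb : 0 ≤ b) (hab : a + b = 1) :
    ∫ x, f x ^ (a * q + b * r) ∂μ ≤
      (∫ x, f x ^ q ∂μ) ^ a * (∫ x, f x ^ r ∂μ) ^ b := by
  refine le_of_eq_of_le (integral_congr_ae ?_) (integral_rpow_mul_rpow_le
    (hf.mono fun x hx => Real.rpow_nonneg hx q) (hf.mono fun x hx => Real.rpow_nonneg hx r)
    hfq hfr ha hb hab)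
  filter_upwards [hf] with x hx
  rw [← Real.rpow_mul hx, ← Real.rpow_mul hx, ← Real.rpow_add_of_nonneg hx (by positivity)
    (by positivity), mul_comm q, mul_comm r]

theorem integral_max_zero_eq_half_integral_abs {X : α → ℝ} (hX : Integrable X μ)
    (hmean : ∫ x, X x ∂μ = 0) :
    ∫ x, max (X x) 0 ∂μ = (∫ x, |X x| ∂μ) / 2 := by
  have hsplit : ∀ x, max (X x) 0 = (X x + |X x|) / 2 := fun x => by
    rcases le_total (X x) 0 with h | h <;> simp [h, abs_of_nonpos, abs_of_nonneg]
  simp_rw [hsplit]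
  rw [integral_div, integral_add hX hX.abs, hmean, zero_add]

end

theorem stmt_0_general {Ω : Type*} [MeasurableSpace Ω] (μ : Measure Ω)
    (p : ℝ) (hp : 2 < p) (X : Ω → ℝ)
    (hLp : Integrable (fun ω => |X ω| ^ p) μ) (hint : Integrable X μ)
    (hmean : ∫ ω, X ω ∂μ = 0) :
    ∫ ω, (max (X ω) 0) ^ (p / 2) ∂μ ≤
      (∫ ω, (max (X ω) 0) ^ p ∂μ) ^ ((p - 2) / (2 * p - 2)) *
        ((∫ ω, |X ω| ∂μ) / 2) ^ (p / (2 * p - 2)) := by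
  have hpos : 0 ≤ᵐ[μ] fun ω => max (X ω) 0 := .of_forall fun ω => le_max_right _ _
  have hint_p : Integrable (fun ω => max (X ω) 0 ^ p) μ := by
    refine hLp.mono (hint.pos_part.aemeasurable.pow_const p).aestronglyMeasurable
      (.of_forall fun ω => ?_)
    simp only [Real.norm_eq_abs, abs_of_nonneg (Real.rpow_nonneg (le_max_right _ _) _),
      abs_of_nonneg (Real.rpow_nonneg (abs_nonneg _) _)]
    exact Real.rpow_le_rpow (le_max_right _ _) (max_le (le_abs_self _) (abs_nonneg _)) (by linarith)
  have hp1 : p - 1 ≠ 0 := by linarith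
  have hexp : (p - 2) / (2 * p - 2) * p + p / (2 * p - 2) * 1 = p / 2 := by
    field_simp; ring
  rw [← integral_max_zero_eq_half_integral_abs hint hmean, ← hexp]
  simpa using integral_rpow_mul_add_mul_le hpos (by linarith) zero_le_one hint_p
    (by simpa using hint.pos_part) (div_nonneg (by linarith) (by linarith))
    (div_nonneg (by linarith) (by linarith)) (by field_simp; ring)

theorem stmt_0 {Ω : Type*} [MeasurableSpace Ω] (μ : Measure Ω) [IsProbabilityMeasure μ]
    (p : ℝ) (hp : 2 < p) (X : Ω → ℝ) (hX : Measurable X)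
    (hLp : Integrable (fun ω => |X ω| ^ p) μ) (hint : Integrable X μ)
    (hmean : ∫ ω, X ω ∂μ = 0) :
    ∫ ω, (max (X ω) 0) ^ (p / 2) ∂μ ≤
      (∫ ω, (max (X ω) 0) ^ p ∂μ) ^ ((p - 2) / (2 * p - 2)) *
        ((∫ ω, |X ω| ∂μ) / 2) ^ (p / (2 * p - 2)) :=
  stmt_0_general μ p hp X hLp hint hmean
end

section
/- Let p ∈ (1,∞) \ {2} and let X be a real random variable with E|X|^p < ∞, EX = 0, and X not almost surely zero. Then (E[X₊^{p/2}])² + (E[X₋^{p/2}])² + (E[X₊^{p/2}])^{-2/(p-2)}·(E[X₋^{p/2}])^{(2p-2)/(p-2)} + (E[X₋^{p/2}])^{-2/(p-2)}·(E[X₊^{p/2}])^{(2p-2)/(p-2)} ≤ E|X|^p. -/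
/-!
Write `A = E X₊^{p/2}`, `B = E X₋^{p/2}`. Every pair `A, B > 0` is realized by a centred two-point
law with atoms `u > 0` and `-v < 0`, and for it the left-hand side is exactly its `p`-th absolute
moment `K`; so the bound is sharp and the proof is by duality. There are coefficients `a, b, γ`
with `a x₊^{p/2} + b x₋^{p/2} + γ x ≤ |x|^p + K` for all real `x`, with equality at `u` and `-v`,
and with `a A + b B = 2 K`. Taking expectations and using `E X = 0` gives `2 K ≤ E|X|^p + K`.
On each half-line the pointwise bound is a nonnegative combination of a weighted AM-GM inequality
between `s`, `s^{p/2}`, `s^p` and Bernoulli's inequality for `s^{p/2}`.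
-/

open MeasureTheory Real

lemma rpow_convexComb_le {s a b w₁ w₂ : ℝ} (hs : 0 ≤ s) (hw₁ : 0 ≤ w₁) (hw₂ : 0 ≤ w₂)
    (hw : w₁ + w₂ = 1) (hab : w₁ * a + w₂ * b ≠ 0) :
    s ^ (w₁ * a + w₂ * b) ≤ w₁ * s ^ a + w₂ * s ^ b := by
  rw [rpow_add' hs hab, mul_comm w₁, mul_comm w₂, rpow_mul hs, rpow_mul hs]
  exact geom_mean_le_arith_mean2_weighted hw₁ hw₂ (rpow_nonneg hs a) (rpow_nonneg hs b) hw

lemma mul_rpow_half_le_rpow_add_mul_self {p s : ℝ} (hp1 : 1 < p) (hp2 : p ≠ 2) (hs : 0 ≤ s) :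
    2 * (p - 1) / (p - 2) * s ^ (p / 2) ≤ s ^ p + p / (p - 2) * s := by
  -- convexity of `r ↦ s ^ r`: the middle one of the exponents `1, p / 2, p` is `1` if `p < 2`
  -- and `p / 2` if `p > 2`
  have hp0 : 0 < p := by linarith
  rcases hp2.lt_or_gt with hlt | hgt
  · have hexp : 2 * (p - 1) / p * (p / 2) + (2 - p) / p * p = 1 := by field_simp; ring
    have h := rpow_convexComb_le (a := p / 2) (b := p) hs (by positivity)
      (div_nonneg (by linarith) hp0.le) (by field_simp; ring) (hexp ▸ one_ne_zero)
    rw [hexp, rpow_one] at h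
    have hgap : s ^ p + p / (p - 2) * s - 2 * (p - 1) / (p - 2) * s ^ (p / 2)
        = p / (2 - p) * (2 * (p - 1) / p * s ^ (p / 2) + (2 - p) / p * s ^ p - s) := by
      field_simp
      ring
    linarith [mul_nonneg (div_nonneg hp0.le (by linarith : (0 : ℝ) ≤ 2 - p)) (sub_nonneg.2 h)]
  · have hp1' : p - 1 ≠ 0 := by linarith
    have hexp : p / (2 * (p - 1)) * 1 + (p - 2) / (2 * (p - 1)) * p = p / 2 := by
      field_simp; ring
    have h := rpow_convexComb_le (a := 1) (b := p)
      (w₁ := p / (2 * (p - 1))) (w₂ := (p - 2) / (2 * (p - 1))) hs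
      (div_nonneg hp0.le (by linarith)) (div_nonneg (by linarith) (by linarith))
      (by field_simp; ring) (by rw [hexp]; positivity)
    rw [hexp, rpow_one] at h
    calc 2 * (p - 1) / (p - 2) * s ^ (p / 2)
        ≤ 2 * (p - 1) / (p - 2) * (p / (2 * (p - 1)) * s + (p - 2) / (2 * (p - 1)) * s ^ p) := by
          gcongr
      _ = s ^ p + p / (p - 2) * s := by
          field_simp
          ring

lemma rpow_sub_tangent_mul_sub_one_nonneg {q s : ℝ} (hq : 0 ≤ q) (hs : 0 ≤ s) :
    0 ≤ (q - 1) * (s ^ q - 1 - q * (s - 1)) := by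
  have hs' : -1 ≤ s - 1 := by linarith
  rcases le_total q 1 with hq1 | hq1
  · have := rpow_one_add_le_one_add_mul_self hs' hq hq1
    rw [add_sub_cancel] at this
    exact mul_nonneg_of_nonpos_of_nonpos (by linarith) (by linarith)
  · have := one_add_mul_self_le_rpow_one_add hs' hq1
    rw [add_sub_cancel] at this
    exact mul_nonneg (by linarith) (by linarith)

lemma support_le_rpow_add_at_one {p s c : ℝ} (hp1 : 1 < p) (hp2 : p ≠ 2) (hs : 0 ≤ s)
    (hc : 0 ≤ c) :
    (2 * (p - 1) - 2 * c) / (p - 2) * s ^ (p / 2) + p * (c - 1) / (p - 2) * s ≤ s ^ p + c := by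
  have hcore := mul_rpow_half_le_rpow_add_mul_self hp1 hp2 hs
  have htangent : 0 ≤ (s ^ (p / 2) - 1 - p / 2 * (s - 1)) / (p - 2) := by
    have h := rpow_sub_tangent_mul_sub_one_nonneg (q := p / 2) (by linarith) hs
    rw [show (s ^ (p / 2) - 1 - p / 2 * (s - 1)) / (p - 2)
        = 2 / (p - 2) ^ 2 * ((p / 2 - 1) * (s ^ (p / 2) - 1 - p / 2 * (s - 1))) by
      field_simp]
    exact mul_nonneg (by positivity) h
  have hgap : s ^ p + c
        - ((2 * (p - 1) - 2 * c) / (p - 2) * s ^ (p / 2) + p * (c - 1) / (p - 2) * s)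
      = (s ^ p + p / (p - 2) * s - 2 * (p - 1) / (p - 2) * s ^ (p / 2))
        + 2 * c * ((s ^ (p / 2) - 1 - p / 2 * (s - 1)) / (p - 2)) := by
    field_simp
    ring
  linarith [mul_nonneg hc htangent]

lemma support_le_rpow_add {p u x K : ℝ} (hp1 : 1 < p) (hp2 : p ≠ 2) (hu : 0 < u) (hx : 0 ≤ x)
    (hK : 0 ≤ K) :
    (2 * (p - 1) * u ^ p - 2 * K) / ((p - 2) * u ^ (p / 2)) * x ^ (p / 2)
      + p * (K - u ^ p) / ((p - 2) * u) * x ≤ x ^ p + K := by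
  have hup : 0 < u ^ p := rpow_pos_of_pos hu p
  obtain ⟨s, hs, rfl⟩ : ∃ s, 0 ≤ s ∧ x = u * s := ⟨x / u, by positivity, by field_simp⟩
  obtain ⟨c, hc, rfl⟩ : ∃ c, 0 ≤ c ∧ K = u ^ p * c := ⟨K / u ^ p, by positivity, by field_simp⟩
  rw [mul_rpow hu.le hs, mul_rpow hu.le hs]
  calc _ = u ^ p * ((2 * (p - 1) - 2 * c) / (p - 2) * s ^ (p / 2)
        + p * (c - 1) / (p - 2) * s) := by
        field_simp
    _ ≤ u ^ p * (s ^ p + c) :=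
        mul_le_mul_of_nonneg_left (support_le_rpow_add_at_one hp1 hp2 hs hc) hup.le
    _ = _ := by ring

/-- `E|Y|^p` for the centred law `Y` with `P(Y = u) = v / (u + v)` and `P(Y = -v) = u / (u + v)`. -/
noncomputable def twoPointMoment (p u v : ℝ) : ℝ := (u ^ p * v + u * v ^ p) / (u + v)

lemma exists_support_twoPointMoment {p u v : ℝ} (hp1 : 1 < p) (hp2 : p ≠ 2) (hu : 0 < u)
    (hv : 0 < v) :
    ∃ a b γ : ℝ,
      (∀ x : ℝ, a * max x 0 ^ (p / 2) + b * max (-x) 0 ^ (p / 2) + γ * x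
        ≤ |x| ^ p + twoPointMoment p u v) ∧
      a * (u ^ (p / 2) * v / (u + v)) + b * (v ^ (p / 2) * u / (u + v))
        = 2 * twoPointMoment p u v := by
  set K := twoPointMoment p u v with hK
  have hK0 : 0 ≤ K := by rw [hK, twoPointMoment]; positivity
  have hzero : (0 : ℝ) ^ (p / 2) = 0 := zero_rpow (by linarith)
  -- the supporting curves at `u` and at `-v` have the same constant term `K` and slope `γ`
  refine ⟨(2 * (p - 1) * u ^ p - 2 * K) / ((p - 2) * u ^ (p / 2)),
    (2 * (p - 1) * v ^ p - 2 * K) / ((p - 2) * v ^ (p / 2)),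
    p * (K - u ^ p) / ((p - 2) * u), fun x => ?_, ?_⟩
  · rcases le_total 0 x with hx | hx
    · rw [max_eq_left hx, max_eq_right (neg_nonpos.2 hx), hzero, abs_of_nonneg hx]
      have := support_le_rpow_add hp1 hp2 hu hx hK0
      linarith
    · have hslope : p * (K - v ^ p) / ((p - 2) * v) = -(p * (K - u ^ p) / ((p - 2) * u)) := by
        rw [hK, twoPointMoment]
        field_simp
        ring
      rw [max_eq_right hx, max_eq_left (neg_nonneg.2 hx), hzero, ← abs_neg,
        abs_of_nonneg (neg_nonneg.2 hx)]
      have := support_le_rpow_add hp1 hp2 hv (neg_nonneg.2 hx) hK0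
      rw [hslope] at this
      linarith
  · rw [hK, twoPointMoment]
    field_simp
    ring

lemma rpow_neg_mul_rpow_two_add {A B r : ℝ} (hA : 0 < A) (hB : 0 < B) :
    A ^ (-r) * B ^ (2 + r) = B ^ 2 * (B / A) ^ r := by
  rw [rpow_add hB, rpow_two, div_rpow hB.le hA.le, rpow_neg hA.le]
  field_simp

lemma moment_expr_eq_twoPointMoment {p u v A B : ℝ} (hp2 : p ≠ 2) (hu : 0 < u) (hv : 0 < v)
    (hA : A = u ^ (p / 2) * v / (u + v)) (hB : B = v ^ (p / 2) * u / (u + v)) :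
    A ^ (2 : ℝ) + B ^ (2 : ℝ) + A ^ (-(2 / (p - 2))) * B ^ ((2 * p - 2) / (p - 2))
      + B ^ (-(2 / (p - 2))) * A ^ ((2 * p - 2) / (p - 2)) = twoPointMoment p u v := by
  have hA0 : 0 < A := hA ▸ by positivity
  have hB0 : 0 < B := hB ▸ by positivity
  have hratio : (B / A) ^ (2 / (p - 2)) = v / u := by
    have : B / A = (v / u) ^ ((p - 2) / 2) := by
      rw [hA, hB, show (p - 2) / 2 = p / 2 - 1 by ring, rpow_sub_one (by positivity),
        div_rpow hv.le hu.le]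
      field_simp
    rw [this, ← rpow_mul (by positivity), show (p - 2) / 2 * (2 / (p - 2)) = 1 by field_simp,
      rpow_one]
  have hratio' : (A / B) ^ (2 / (p - 2)) = u / v := by
    rw [← inv_div, inv_rpow (by positivity), hratio, inv_div]
  have hsq : ∀ w : ℝ, 0 < w → (w ^ (p / 2)) ^ 2 = w ^ p := fun w hw => by
    rw [← rpow_mul_natCast hw.le]
    norm_num
  rw [show (2 * p - 2) / (p - 2) = 2 + 2 / (p - 2) by field_simp; ring,
    rpow_neg_mul_rpow_two_add hA0 hB0, rpow_neg_mul_rpow_two_add hB0 hA0, hratio, hratio',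
    rpow_two, rpow_two, hA, hB, twoPointMoment]
  field_simp
  rw [hsq u hu, hsq v hv]
  ring

lemma exists_twoPoint_params {p A B : ℝ} (hp0 : 0 < p) (hp2 : p ≠ 2) (hA : 0 < A) (hB : 0 < B) :
    ∃ u v : ℝ, 0 < u ∧ 0 < v ∧ A = u ^ (p / 2) * v / (u + v) ∧ B = v ^ (p / 2) * u / (u + v) := by
  -- `t = u / v` is forced by `A / B = (u / v) ^ ((p - 2) / 2)`, then `B` fixes the scale
  set t := (A / B) ^ (2 / (p - 2)) with ht
  have ht0 : 0 < t := by positivity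
  have htA : t ^ ((p - 2) / 2) = A / B := by
    rw [ht, ← rpow_mul (by positivity), show 2 / (p - 2) * ((p - 2) / 2) = 1 by field_simp,
      rpow_one]
  set v := (B * (t + 1) / t) ^ (2 / p) with hv
  have hv0 : 0 < v := by positivity
  have hvB : v ^ (p / 2) = B * (t + 1) / t := by
    rw [hv, ← rpow_mul (by positivity), show 2 / p * (p / 2) = 1 by field_simp, rpow_one]
  refine ⟨t * v, v, by positivity, hv0, ?_, ?_⟩
  · rw [mul_rpow ht0.le hv0.le, hvB, show p / 2 = (p - 2) / 2 + 1 by ring, rpow_add_one ht0.ne',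
      htA]
    field_simp
  · rw [hvB]
    field_simp

lemma integrable_max_zero_rpow {Ω : Type*} [MeasurableSpace Ω] {μ : Measure Ω} [IsFiniteMeasure μ]
    {Y : Ω → ℝ} {p q : ℝ} (hY : Measurable Y) (hq : 0 ≤ q) (hqp : q ≤ p)
    (hYp : Integrable (fun ω => |Y ω| ^ p) μ) :
    Integrable (fun ω => max (Y ω) 0 ^ q) μ := by
  refine ((integrable_const 1).add hYp).mono'
    ((hY.max measurable_const).pow_const q).aestronglyMeasurable (ae_of_all _ fun ω => ?_)
  have hle : max (Y ω) 0 ^ q ≤ |Y ω| ^ q :=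
    rpow_le_rpow (le_max_right _ _) (max_le (le_abs_self _) (abs_nonneg _)) hq
  rw [norm_of_nonneg (rpow_nonneg (le_max_right _ _) q), Pi.add_apply]
  rcases le_total |Y ω| 1 with h1 | h1
  · linarith [rpow_le_one (abs_nonneg (Y ω)) h1 hq, rpow_nonneg (abs_nonneg (Y ω)) p]
  · linarith [rpow_le_rpow_of_exponent_le h1 hqp]

theorem stmt_4 {Ω : Type*} [MeasurableSpace Ω] (μ : Measure Ω) [IsProbabilityMeasure μ]
    (p : ℝ) (hp1 : 1 < p) (hp2 : p ≠ 2) (X : Ω → ℝ) (hX : Measurable X)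
    (hLp : Integrable (fun ω => |X ω| ^ p) μ) (hint : Integrable X μ)
    (hmean : ∫ ω, X ω ∂μ = 0)
    (hposP : 0 < ∫ ω, (max (X ω) 0) ^ (p / 2) ∂μ)
    (hposM : 0 < ∫ ω, (max (-X ω) 0) ^ (p / 2) ∂μ) :
    (∫ ω, (max (X ω) 0) ^ (p / 2) ∂μ) ^ (2 : ℝ) +
      (∫ ω, (max (-X ω) 0) ^ (p / 2) ∂μ) ^ (2 : ℝ) +
      (∫ ω, (max (X ω) 0) ^ (p / 2) ∂μ) ^ (-(2 / (p - 2))) *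
        (∫ ω, (max (-X ω) 0) ^ (p / 2) ∂μ) ^ ((2 * p - 2) / (p - 2)) +
      (∫ ω, (max (-X ω) 0) ^ (p / 2) ∂μ) ^ (-(2 / (p - 2))) *
        (∫ ω, (max (X ω) 0) ^ (p / 2) ∂μ) ^ ((2 * p - 2) / (p - 2)) ≤
      ∫ ω, |X ω| ^ p ∂μ := by
  set A := ∫ ω, (max (X ω) 0) ^ (p / 2) ∂μ
  set B := ∫ ω, (max (-X ω) 0) ^ (p / 2) ∂μ
  obtain ⟨u, v, hu, hv, hAuv, hBuv⟩ := exists_twoPoint_params (by linarith) hp2 hposP hposM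
  obtain ⟨a, b, γ, hsupport, hcoeff⟩ := exists_support_twoPointMoment hp1 hp2 hu hv
  have hXp : Integrable (fun ω => max (X ω) 0 ^ (p / 2)) μ :=
    integrable_max_zero_rpow hX (by linarith) (by linarith) hLp
  have hXm : Integrable (fun ω => max (-X ω) 0 ^ (p / 2)) μ :=
    integrable_max_zero_rpow (p := p) hX.neg (by linarith) (by linarith)
      (by simpa only [Pi.neg_apply, abs_neg] using hLp)
  have hdual : a * A + b * B ≤ ∫ ω, |X ω| ^ p ∂μ + twoPointMoment p u v := by
    have hparts : Integrable (fun ω => a * max (X ω) 0 ^ (p / 2) + b * max (-X ω) 0 ^ (p / 2)) μ :=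
      (hXp.const_mul a).add (hXm.const_mul b)
    have h := integral_mono (hparts.add (hint.const_mul γ)) (hLp.add (integrable_const _))
      fun ω => hsupport (X ω)
    simp only [Pi.add_apply] at h
    rwa [integral_add hparts (hint.const_mul γ),
      integral_add (hXp.const_mul a) (hXm.const_mul b), integral_const_mul, integral_const_mul,
      integral_const_mul, hmean, integral_add hLp (integrable_const _), integral_const,
      probReal_univ, one_smul, mul_zero, add_zero] at h
  rw [moment_expr_eq_twoPointMoment hp2 hu hv hAuv hBuv]
  rw [hAuv, hBuv] at hdual
  linarith
end

section
/- Let p ∈ (1,∞) \ {2} and let a, b > 0. Then (a - b)² ≤ ((p² - 4p + 4)/(2p² - 4p + 4)) · (a² + b² + a^{2/(2-p)}·b^{(2p-2)/(p-2)} + b^{2/(2-p)}·a^{(2p-2)/(p-2)}). -/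
/-!
Put `m = p / (2 - p)`, so that `|m| ≥ 1`, the exponents are `1 + m` and `1 - m`, and the
constant is `1 / (1 + m²)`. Writing `a = eᵘ`, `b = eᵛ`, the inequality follows from
`m² (cosh x - 1) ≤ cosh (m x) - 1` at `x = u - v`; since `cosh z - 1 = 2 sinh² (z / 2)`, this is
`|m| sinh y ≤ sinh (|m| y)` for `y ≥ 0`, which holds because `sinh (m t) - m sinh t` has
derivative `m (cosh (m t) - cosh t) ≥ 0`.
-/

open Real Set

namespace Real

theorem mul_sinh_le_sinh_mul {m y : ℝ} (hm : 1 ≤ m) (hy : 0 ≤ y) :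
    m * sinh y ≤ sinh (m * y) := by
  have hderiv : ∀ t, HasDerivAt (fun t => sinh (m * t) - m * sinh t)
      (m * (cosh (m * t) - cosh t)) t := fun t =>
    (((hasDerivAt_id t).const_mul m).sinh.sub ((hasDerivAt_sinh t).const_mul m)).congr_deriv
      (by simp only [id_eq, mul_one]; ring)
  have hmono : MonotoneOn (fun t => sinh (m * t) - m * sinh t) (Ici 0) := by
    refine monotoneOn_of_hasDerivWithinAt_nonneg (convex_Ici 0)
      (by fun_prop) (fun t _ => (hderiv t).hasDerivWithinAt) fun t ht => ?_
    rw [interior_Ici, mem_Ioi] at ht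
    have : cosh t ≤ cosh (m * t) := by
      rw [cosh_le_cosh, abs_mul]
      exact le_mul_of_one_le_left (abs_nonneg t) (hm.trans (le_abs_self m))
    nlinarith
  simpa using hmono self_mem_Ici hy hy

theorem cosh_sub_one_eq_two_mul_sinh_sq (x : ℝ) : cosh x - 1 = 2 * sinh (x / 2) ^ 2 := by
  have h := cosh_two_mul (x / 2)
  rw [mul_div_cancel₀ x two_ne_zero, cosh_sq'] at h
  linarith

theorem sq_mul_cosh_sub_one_le {m : ℝ} (hm : 1 ≤ |m|) (x : ℝ) :
    m ^ 2 * (cosh x - 1) ≤ cosh (m * x) - 1 := by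
  have key : |m| * sinh |x / 2| ≤ sinh (|m| * |x / 2|) := mul_sinh_le_sinh_mul hm (abs_nonneg _)
  have hsinh : 0 ≤ sinh |x / 2| := sinh_nonneg_iff.2 (abs_nonneg _)
  have hsq : (|m| * sinh |x / 2|) ^ 2 ≤ sinh (|m| * |x / 2|) ^ 2 :=
    pow_le_pow_left₀ (by positivity) key 2
  rw [← abs_mul, ← abs_sinh, ← abs_sinh, mul_pow, sq_abs, sq_abs, sq_abs] at hsq
  rw [cosh_sub_one_eq_two_mul_sinh_sq, cosh_sub_one_eq_two_mul_sinh_sq, mul_div_assoc]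
  nlinarith

end Real

theorem sq_mul_sub_sq_le_rpow_mul_rpow {a b m : ℝ} (ha : 0 < a) (hb : 0 < b) (hm : 1 ≤ |m|) :
    m ^ 2 * (a - b) ^ 2 ≤ a ^ (1 + m) * b ^ (1 - m) + b ^ (1 + m) * a ^ (1 - m) - 2 * a * b := by
  obtain ⟨u, rfl⟩ : ∃ u, exp u = a := ⟨log a, exp_log ha⟩
  obtain ⟨v, rfl⟩ : ∃ v, exp v = b := ⟨log b, exp_log hb⟩
  have hcosh := sq_mul_cosh_sub_one_le hm (u - v)
  rw [cosh_eq, cosh_eq, neg_sub, exp_sub, exp_sub] at hcosh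
  have h₁ : exp u ^ (1 + m) * exp v ^ (1 - m) = exp u * exp v * exp (m * (u - v)) := by
    simp only [← exp_mul, ← exp_add]
    ring_nf
  have h₂ : exp v ^ (1 + m) * exp u ^ (1 - m) = exp u * exp v * exp (-(m * (u - v))) := by
    simp only [← exp_mul, ← exp_add]
    ring_nf
  have hsq : (exp u - exp v) ^ 2 =
      2 * exp u * exp v * ((exp u / exp v + exp v / exp u) / 2 - 1) := by
    field_simp
    ring
  rw [h₁, h₂, hsq]
  nlinarith [mul_le_mul_of_nonneg_left hcosh (by positivity : 0 ≤ 2 * exp u * exp v)]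

theorem one_le_abs_div_two_sub {p : ℝ} (hp1 : 1 < p) (hp2 : p ≠ 2) : 1 ≤ |p / (2 - p)| := by
  have h2p : 0 < |2 - p| := abs_pos.2 (sub_ne_zero.2 hp2.symm)
  rw [abs_div, one_le_div h2p]
  rcases lt_or_gt_of_ne hp2 with hp | hp
  · rw [abs_of_pos (by linarith : 0 < p), abs_of_pos (by linarith : 0 < 2 - p)]
    linarith
  · rw [abs_of_pos (by linarith : 0 < p), abs_of_neg (by linarith : 2 - p < 0)]
    linarith

theorem stmt_5 (p : ℝ) (hp1 : 1 < p) (hp2 : p ≠ 2) (a b : ℝ) (ha : 0 < a) (hb : 0 < b) :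
    (a - b) ^ (2 : ℕ) ≤
      ((p ^ 2 - 4 * p + 4) / (2 * p ^ 2 - 4 * p + 4)) *
        (a ^ (2 : ℕ) + b ^ (2 : ℕ) + a ^ (2 / (2 - p)) * b ^ ((2 * p - 2) / (p - 2)) +
          b ^ (2 / (2 - p)) * a ^ ((2 * p - 2) / (p - 2))) := by
  have h2p : 2 - p ≠ 0 := sub_ne_zero.2 hp2.symm
  have hp2' : p - 2 ≠ 0 := sub_ne_zero.2 hp2
  have hexp₁ : 2 / (2 - p) = 1 + p / (2 - p) := by field_simp; ring
  have hexp₂ : (2 * p - 2) / (p - 2) = 1 - p / (2 - p) := by field_simp; ring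
  have hcoeff : (p ^ 2 - 4 * p + 4) / (2 * p ^ 2 - 4 * p + 4) = (1 + (p / (2 - p)) ^ 2)⁻¹ := by
    have hden : 2 * p ^ 2 - 4 * p + 4 ≠ 0 := by nlinarith [sq_nonneg (p - 1)]
    rw [div_pow, one_add_div (pow_ne_zero 2 h2p), inv_div, div_eq_div_iff hden (by positivity)]
    ring
  have hkey := sq_mul_sub_sq_le_rpow_mul_rpow ha hb (one_le_abs_div_two_sub hp1 hp2)
  rw [hexp₁, hexp₂, hcoeff, inv_mul_eq_div, le_div_iff₀ (by positivity)]
  nlinarith [mul_pos ha hb]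
end

section
/- Let p > 1 and let a, b be real numbers. Define φ_s(x) = sign(x)·|x|^s. Then (φ_{p-1}(a) - φ_{p-1}(b))·(a - b) ≥ (4(p-1)/p²)·(φ_{p/2}(a) - φ_{p/2}(b))². -/
/-!
By the fundamental theorem of calculus, `φ_s(a) - φ_s(b) = s ∫_b^a |t|^(s-1) dt` for every
`s > 0`; the singularity of the integrand at `0` is integrable. For `s = p/2` and `s = p - 1` the
integrands are `g` and `g²` with `g t = |t|^(p/2-1)`, so Cauchy–Schwarz,
`(∫_b^a g)² ≤ (a - b) ∫_b^a g²`, gives the inequality, the factors `(p/2)²` and `p - 1` producing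
the constant `4(p-1)/p²`.
-/

/-- `φ_s(x) = sign(x) · |x|^s`. -/
noncomputable def phi (s x : ℝ) : ℝ := Real.sign x * |x| ^ s

open Real Set Filter Topology intervalIntegral
open MeasureTheory (volume)

lemma hasDerivAt_phi (s : ℝ) {x : ℝ} (hx : x ≠ 0) :
    HasDerivAt (phi s) (s * |x| ^ (s - 1)) x := by
  have hrpow := fun (d : ℝ) (hd : HasDerivAt (|·|) d x) =>
    hd.rpow_const (p := s) (Or.inl (abs_ne_zero.2 hx))
  rcases hx.lt_or_gt with hneg | hpos
  · have heq : phi s =ᶠ[𝓝 x] fun y => -|y| ^ s := by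
      filter_upwards [Iio_mem_nhds hneg] with y hy
      simp [phi, Real.sign_of_neg (show y < 0 from hy)]
    simpa using ((hrpow _ (hasDerivAt_abs_neg hneg)).neg).congr_of_eventuallyEq heq
  · have heq : phi s =ᶠ[𝓝 x] fun y => |y| ^ s := by
      filter_upwards [Ioi_mem_nhds hpos] with y hy
      simp [phi, Real.sign_of_pos (show 0 < y from hy)]
    simpa using (hrpow _ (hasDerivAt_abs_pos hpos)).congr_of_eventuallyEq heq

lemma abs_phi_le (s x : ℝ) : |phi s x| ≤ |x| ^ s := by
  rw [phi, abs_mul, abs_of_nonneg (rpow_nonneg (abs_nonneg x) s)]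
  refine mul_le_of_le_one_left (rpow_nonneg (abs_nonneg x) s) ?_
  rcases Real.sign_apply_eq x with h | h | h <;> simp [h]

lemma continuous_phi {s : ℝ} (hs : 0 < s) : Continuous (phi s) := by
  refine continuous_iff_continuousAt.2 fun x => ?_
  rcases eq_or_ne x 0 with rfl | hx
  · have h0 : Tendsto (fun y : ℝ => |y| ^ s) (𝓝 0) (𝓝 0) := by
      simpa [zero_rpow hs.ne'] using
        (continuous_abs.rpow_const fun _ => Or.inr hs.le).tendsto (0 : ℝ)
    simpa [ContinuousAt, phi] using squeeze_zero_norm (abs_phi_le s) h0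
  · exact (hasDerivAt_phi s hx).continuousAt

lemma intervalIntegrable_abs_rpow {r : ℝ} (hr : -1 < r) (a b : ℝ) :
    IntervalIntegrable (fun t => |t| ^ r) volume a b := by
  have hpos : ∀ c, 0 ≤ c → IntervalIntegrable (fun t => |t| ^ r) volume 0 c := fun c hc =>
    (intervalIntegrable_rpow' hr).congr fun t ht => by
      rw [uIoc_of_le hc] at ht
      simp [abs_of_pos ht.1]
  have hall : ∀ c, IntervalIntegrable (fun t => |t| ^ r) volume 0 c := by
    intro c
    rcases le_total 0 c with hc | hc
    · exact hpos c hc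
    · simpa [abs_neg] using (IntervalIntegrable.iff_comp_neg).1 (hpos (-c) (by linarith))
  exact (hall a).symm.trans (hall b)

lemma phi_sub_phi_eq_integral {s : ℝ} (hs : 0 < s) (a b : ℝ) :
    phi s b - phi s a = s * ∫ t in a..b, |t| ^ (s - 1) := by
  rw [← intervalIntegral.integral_const_mul]
  refine (MeasureTheory.integral_eq_of_hasDerivAt_off_countable _ _ (countable_singleton 0)
    (continuous_phi hs).continuousOn (fun x hx => hasDerivAt_phi s hx.2) ?_).symm
  exact (intervalIntegrable_abs_rpow (by linarith) a b).const_mul s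

lemma sq_integral_le_mul_integral_sq {f : ℝ → ℝ} {a b : ℝ}
    (hf : IntervalIntegrable f volume a b) (hf2 : IntervalIntegrable (fun t => f t ^ 2) volume a b) :
    (∫ t in a..b, f t) ^ 2 ≤ (b - a) * ∫ t in a..b, f t ^ 2 := by
  wlog hab : a ≤ b generalizing a b
  · have := this hf.symm hf2.symm (le_of_not_ge hab)
    rw [integral_symm a b, integral_symm a b] at this
    linarith [neg_sq (∫ t in b..a, f t)]
  set I := ∫ t in a..b, f t
  set J := ∫ t in a..b, f t ^ 2
  have hexp : ∫ t in a..b, ((b - a) * f t - I) ^ 2 = (b - a) * ((b - a) * J - I ^ 2) := by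
    have h1 := hf2.const_mul ((b - a) ^ 2)
    have h2 := hf.const_mul (2 * (b - a) * I)
    simp only [fun t => show ((b - a) * f t - I) ^ 2
      = (b - a) ^ 2 * f t ^ 2 - 2 * (b - a) * I * f t + I ^ 2 by ring]
    rw [integral_add (h1.sub h2) intervalIntegrable_const, integral_sub h1 h2,
      integral_const_mul, integral_const_mul, integral_const, smul_eq_mul]
    ring
  have hnonneg : 0 ≤ ∫ t in a..b, ((b - a) * f t - I) ^ 2 :=
    integral_nonneg hab fun t _ => sq_nonneg _
  rcases hab.lt_or_eq with hlt | rfl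
  · exact sub_nonneg.1 (nonneg_of_mul_nonneg_right (hexp ▸ hnonneg) (sub_pos.2 hlt))
  · simp [I]

theorem stmt_8 (p : ℝ) (hp : 1 < p) (a b : ℝ) :
    (4 * (p - 1) / p ^ 2) * (phi (p / 2) a - phi (p / 2) b) ^ (2 : ℕ) ≤
      (phi (p - 1) a - phi (p - 1) b) * (a - b) := by
  set I := ∫ t in b..a, |t| ^ (p / 2 - 1)
  set J := ∫ t in b..a, |t| ^ (p - 2)
  have hI : phi (p / 2) a - phi (p / 2) b = p / 2 * I :=
    phi_sub_phi_eq_integral (by linarith) b a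
  have hJ : phi (p - 1) a - phi (p - 1) b = (p - 1) * J := by
    rw [phi_sub_phi_eq_integral (by linarith) b a, sub_sub, one_add_one_eq_two]
  have hsq : ∀ t : ℝ, (|t| ^ (p / 2 - 1)) ^ 2 = |t| ^ (p - 2) := fun t => by
    rw [← rpow_natCast, ← rpow_mul (abs_nonneg t)]
    congr 1
    push_cast
    ring
  have hCS : I ^ 2 ≤ (a - b) * J := by
    simpa only [hsq] using sq_integral_le_mul_integral_sq
      (intervalIntegrable_abs_rpow (r := p / 2 - 1) (by linarith) b a)
      (by simpa only [hsq] using intervalIntegrable_abs_rpow (r := p - 2) (by linarith) b a)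
  calc 4 * (p - 1) / p ^ 2 * (phi (p / 2) a - phi (p / 2) b) ^ 2 = (p - 1) * I ^ 2 := by
        rw [hI]; field_simp; ring
    _ ≤ (p - 1) * ((a - b) * J) := mul_le_mul_of_nonneg_left hCS (by linarith)
    _ = (phi (p - 1) a - phi (p - 1) b) * (a - b) := by rw [hJ]; ring
end

section
/- Let 1 < p < 2 and let f: {-1,1}^n → {-1,0,1} satisfy Ê f(S) = 0 for all S with |S| < k. Then for all t > 0, E|P_t f|^p ≤ e^{-2tk(p-1)}·E|f|^p, where P_t f = ∑_S e^{-t|S|} f̂(S) W_S. -/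
/-- Expectation with respect to the uniform measure on `{-1,1}^n` (modeled by `Fin n → Bool`). -/
noncomputable def cubeE (n : ℕ) (f : (Fin n → Bool) → ℝ) : ℝ := (∑ x, f x) / 2 ^ n

/-- The Walsh character `W_S(x) = ∏_{i ∈ S} x_i`. -/
noncomputable def walsh (n : ℕ) (S : Finset (Fin n)) (x : Fin n → Bool) : ℝ :=
  ∏ i ∈ S, (if x i then (1 : ℝ) else -1)

/-- Fourier coefficient `f̂(S) = E[f · W_S]`. -/
noncomputable def cubeCoeff (n : ℕ) (f : (Fin n → Bool) → ℝ) (S : Finset (Fin n)) : ℝ :=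
  cubeE n fun x => f x * walsh n S x

/-- The heat semigroup `P_t f = ∑_S e^{-t|S|} f̂(S) W_S`. -/
noncomputable def heat (n : ℕ) (t : ℝ) (f : (Fin n → Bool) → ℝ) : (Fin n → Bool) → ℝ :=
  fun x => ∑ S : Finset (Fin n), Real.exp (-t * S.card) * cubeCoeff n f S * walsh n S x


/-! The heat semigroup is averaging against the kernel `∏ i, (1 + e^{-t} x_i y_i)`, which is
nonnegative with mean one, so it contracts `L¹`; by Parseval it shrinks `L²` by `e^{-2tk}` on
functions without Fourier mass below level `k`. Hölder interpolates:
`E|g|^p ≤ (E|g|)^{2-p} (E g²)^{p-1}`, and for `{-1,0,1}`-valued `f` all of `E|f|`, `E f²`,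
`E|f|^p` coincide. -/

open Finset Real
open scoped BigOperators

noncomputable def boolSign (b : Bool) : ℝ := if b then 1 else -1

lemma cubeE_eq_expect (n : ℕ) (f : (Fin n → Bool) → ℝ) : cubeE n f = 𝔼 x, f x := by
  simp [cubeE, Fintype.expect_eq_sum_div_card]

lemma expect_prod_apply {n : ℕ} (g : Fin n → Bool → ℝ) :
    𝔼 x : Fin n → Bool, ∏ i, g i (x i) = ∏ i, (g i true + g i false) / 2 := by
  simp [Fintype.expect_eq_sum_div_card, ← Fintype.prod_sum, prod_div_distrib]

lemma walsh_eq_prod_univ (n : ℕ) (S : Finset (Fin n)) (x : Fin n → Bool) :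
    walsh n S x = ∏ i, if i ∈ S then boolSign (x i) else 1 := by
  rw [walsh, Fintype.prod_ite_mem]
  rfl

lemma expect_walsh_mul_walsh (n : ℕ) (S T : Finset (Fin n)) :
    𝔼 x, walsh n S x * walsh n T x = if S = T then 1 else 0 := by
  have hfactor (i : Fin n) :
      ((if i ∈ S then boolSign true else 1) * (if i ∈ T then boolSign true else 1) +
        (if i ∈ S then boolSign false else 1) * (if i ∈ T then boolSign false else 1)) / 2 =
      if (i ∈ S ↔ i ∈ T) then 1 else 0 := by
    by_cases hS : i ∈ S <;> by_cases hT : i ∈ T <;> norm_num [hS, hT, boolSign]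
  simp_rw [walsh_eq_prod_univ, ← prod_mul_distrib]
  rw [expect_prod_apply fun i b =>
    (if i ∈ S then boolSign b else 1) * (if i ∈ T then boolSign b else 1)]
  simp_rw [hfactor, Fintype.prod_boole, ← Finset.ext_iff]

noncomputable def heatKernel (n : ℕ) (t : ℝ) (x y : Fin n → Bool) : ℝ :=
  ∏ i, (1 + exp (-t) * (boolSign (x i) * boolSign (y i)))

lemma sum_exp_mul_walsh_mul_walsh (n : ℕ) (t : ℝ) (x y : Fin n → Bool) :
    ∑ S : Finset (Fin n), exp (-t * S.card) * (walsh n S x * walsh n S y) =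
      heatKernel n t x y := by
  rw [heatKernel, prod_one_add, powerset_univ]
  refine sum_congr rfl fun S _ => ?_
  rw [prod_mul_distrib, prod_const, walsh, walsh, ← prod_mul_distrib,
    ← exp_nat_mul, mul_comm (S.card : ℝ)]
  rfl

lemma heat_eq_expect_heatKernel_mul (n : ℕ) (t : ℝ) (f : (Fin n → Bool) → ℝ)
    (x : Fin n → Bool) : heat n t f x = 𝔼 y, heatKernel n t x y * f y := by
  simp_rw [heat, cubeCoeff, cubeE_eq_expect, ← sum_exp_mul_walsh_mul_walsh, sum_mul,
    mul_expect, expect_mul, ← expect_sum_comm]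
  refine expect_congr rfl fun y _ => sum_congr rfl fun S _ => ?_
  ring

lemma heatKernel_nonneg (n : ℕ) {t : ℝ} (ht : 0 ≤ t) (x y : Fin n → Bool) :
    0 ≤ heatKernel n t x y := by
  have hexp : exp (-t) ≤ 1 := exp_le_one_iff.2 (by linarith)
  refine prod_nonneg fun i _ => ?_
  cases x i <;> cases y i <;> norm_num [boolSign] <;> linarith [exp_pos (-t)]

lemma expect_heatKernel_left (n : ℕ) (t : ℝ) (y : Fin n → Bool) :
    𝔼 x, heatKernel n t x y = 1 := by
  unfold heatKernel
  rw [expect_prod_apply (fun i b => 1 + exp (-t) * (boolSign b * boolSign (y i)))]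
  refine prod_eq_one fun i _ => ?_
  cases y i <;> norm_num [boolSign] <;> ring

lemma heatKernel_zero (n : ℕ) (x y : Fin n → Bool) :
    heatKernel n 0 x y = if x = y then 2 ^ n else 0 := by
  have hfactor (i : Fin n) : 1 + exp (-0) * (boolSign (x i) * boolSign (y i)) =
      if x i = y i then 2 else 0 := by
    cases x i <;> cases y i <;> norm_num [boolSign]
  simp_rw [heatKernel, hfactor, Fintype.prod_ite_zero, ← funext_iff]
  simp

lemma heat_zero (n : ℕ) (f : (Fin n → Bool) → ℝ) : heat n 0 f = f := by
  ext x
  rw [heat_eq_expect_heatKernel_mul, Fintype.expect_eq_sum_div_card]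
  simp [heatKernel_zero, ite_mul]

lemma expect_sq_sum_mul_walsh (n : ℕ) (a : Finset (Fin n) → ℝ) :
    𝔼 x, (∑ S, a S * walsh n S x) ^ 2 = ∑ S, a S ^ 2 := by
  simp_rw [sq, sum_mul_sum, expect_sum_comm]
  have hterm (S T : Finset (Fin n)) :
      𝔼 x, a S * walsh n S x * (a T * walsh n T x) = if S = T then a S * a T else 0 := by
    simp_rw [mul_mul_mul_comm, ← mul_expect, expect_walsh_mul_walsh, mul_ite, mul_one,
      mul_zero]
  simp [hterm]

lemma expect_sq_heat (n : ℕ) (t : ℝ) (f : (Fin n → Bool) → ℝ) :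
    𝔼 x, heat n t f x ^ 2 = ∑ S, (exp (-t * S.card) * cubeCoeff n f S) ^ 2 :=
  expect_sq_sum_mul_walsh n _

lemma expect_sq_heat_le {n k : ℕ} {t : ℝ} (ht : 0 ≤ t) (f : (Fin n → Bool) → ℝ)
    (hcoeff : ∀ S : Finset (Fin n), S.card < k → cubeCoeff n f S = 0) :
    𝔼 x, heat n t f x ^ 2 ≤ exp (-2 * t * k) * 𝔼 x, f x ^ 2 := by
  conv_rhs => rw [← heat_zero n f]
  simp_rw [expect_sq_heat, neg_zero, zero_mul, exp_zero, one_mul, mul_sum]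
  refine sum_le_sum fun S _ => ?_
  rcases lt_or_ge S.card k with hS | hS
  · simp [hcoeff S hS]
  · have hk : (k : ℝ) ≤ S.card := by exact_mod_cast hS
    rw [mul_pow, ← exp_nat_mul]
    exact mul_le_mul_of_nonneg_right (exp_le_exp.2 (by push_cast; nlinarith)) (sq_nonneg _)

lemma expect_abs_heat_le (n : ℕ) {t : ℝ} (ht : 0 ≤ t) (f : (Fin n → Bool) → ℝ) :
    𝔼 x, |heat n t f x| ≤ 𝔼 x, |f x| :=
  calc 𝔼 x, |heat n t f x| ≤ 𝔼 x, 𝔼 y, heatKernel n t x y * |f y| := by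
        refine expect_le_expect fun x _ => ?_
        rw [heat_eq_expect_heatKernel_mul]
        refine (abs_expect_le _ _).trans_eq (expect_congr rfl fun y _ => ?_)
        rw [abs_mul, abs_of_nonneg (heatKernel_nonneg n ht x y)]
    _ = 𝔼 y, (𝔼 x, heatKernel n t x y) * |f y| := by
        rw [expect_comm]
        simp_rw [expect_mul]
    _ = 𝔼 x, |f x| := by simp_rw [expect_heatKernel_left, one_mul]

lemma expect_abs_rpow_le_expect_abs_mul_expect_sq {ι : Type*} (s : Finset ι) (g : ι → ℝ) {p : ℝ}
    (hp1 : 1 < p) (hp2 : p ≤ 2) :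
    𝔼 i ∈ s, |g i| ^ p ≤ (𝔼 i ∈ s, |g i|) ^ (2 - p) * (𝔼 i ∈ s, g i ^ 2) ^ (p - 1) := by
  -- weighted Hölder with weights `|g i|` and exponent `(p - 1)⁻¹`
  have hq : 1 ≤ (p - 1)⁻¹ := one_le_inv_iff₀.2 ⟨by linarith, by linarith⟩
  have key := compact_inner_le_weight_mul_Lp_of_nonneg s hq
    (w := fun i => |g i|) (f := fun i => |g i| ^ (p - 1)) (fun i => abs_nonneg _)
    (fun i => by positivity)
  have hpow (i : ι) : |g i| * |g i| ^ (p - 1) = |g i| ^ p := by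
    rw [← rpow_one_add' (abs_nonneg _) (by linarith)]
    ring_nf
  have hsq (i : ι) : |g i| * (|g i| ^ (p - 1)) ^ (p - 1)⁻¹ = g i ^ 2 := by
    rw [rpow_rpow_inv (abs_nonneg _) (by linarith), abs_mul_abs_self, sq]
  simp only [hpow, hsq, inv_inv] at key
  convert key using 3
  ring

theorem stmt_11 (n k : ℕ) (p : ℝ) (hp1 : 1 < p) (hp2 : p < 2)
    (f : (Fin n → Bool) → ℝ) (hval : ∀ x, f x = -1 ∨ f x = 0 ∨ f x = 1)
    (hcoeff : ∀ S : Finset (Fin n), S.card < k → cubeCoeff n f S = 0)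
    (t : ℝ) (ht : 0 < t) :
    cubeE n (fun x => |heat n t f x| ^ p) ≤
      Real.exp (-2 * t * k * (p - 1)) * cubeE n (fun x => |f x| ^ p) := by
  have habs_rpow (x) : |f x| ^ p = |f x| := by
    rcases hval x with h | h | h <;> simp [h, zero_rpow (by linarith : p ≠ 0)]
  have hsq (x) : f x ^ 2 = |f x| := by
    rcases hval x with h | h | h <;> simp [h]
  have hL2 := expect_sq_heat_le ht.le f hcoeff
  simp_rw [hsq] at hL2
  set A := 𝔼 x, |f x|
  have hA : 0 ≤ A := expect_nonneg fun x _ => abs_nonneg _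
  simp_rw [cubeE_eq_expect, habs_rpow]
  calc 𝔼 x, |heat n t f x| ^ p
      ≤ (𝔼 x, |heat n t f x|) ^ (2 - p) * (𝔼 x, heat n t f x ^ 2) ^ (p - 1) :=
        expect_abs_rpow_le_expect_abs_mul_expect_sq _ _ hp1 hp2.le
    _ ≤ A ^ (2 - p) * (exp (-2 * t * k) * A) ^ (p - 1) := by
        gcongr
        exact expect_abs_heat_le n ht.le f
    _ = exp (-2 * t * k * (p - 1)) * A := by
        rw [mul_rpow (exp_pos _).le hA, mul_left_comm, ← rpow_add' hA (by norm_num),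
          show 2 - p + (p - 1) = 1 by ring, rpow_one, ← exp_mul]
end

section
/- Let (P_s)_{s≥0} be a semigroup of symmetric linear contractions on an inner product space H. Then for any ε, t > 0 and any f ∈ H, ‖P_{ε+t} f - P_ε f‖ ≤ (2t/ε)·‖f‖. -/
open RealInnerProductSpace

theorem stmt_13 {H : Type*} [NormedAddCommGroup H] [InnerProductSpace ℝ H]
    (P : ℝ → H →ₗ[ℝ] H)
    (hsemi : ∀ s t : ℝ, 0 ≤ s → 0 ≤ t → ∀ f : H, P s (P t f) = P (s + t) f)
    (hid : ∀ f : H, P 0 f = f)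
    (hsym : ∀ s : ℝ, 0 ≤ s → ∀ f g : H, ⟪P s f, g⟫ = ⟪f, P s g⟫)
    (hcontr : ∀ s : ℝ, 0 ≤ s → ∀ f : H, ‖P s f‖ ≤ ‖f‖)
    (ε t : ℝ) (hε : 0 < ε) (ht : 0 < t) (f : H) :
    ‖P (ε + t) f - P ε f‖ ≤ (2 * t / ε) * ‖f‖ := by
  set n : ℕ := ⌊ε / t⌋₊ with hn
  have hnt : (n : ℝ) * t ≤ ε := by
    rw [← le_div_iff₀ ht]
    exact Nat.floor_le (by positivity)
  have hεlt : ε < ((n : ℝ) + 1) * t := by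
    rw [← div_lt_iff₀ ht]
    exact Nat.lt_floor_add_one _
  set ε₀ : ℝ := ε - n * t with hε₀def
  have hε₀ : 0 ≤ ε₀ := by simp only [hε₀def]; linarith
  set u : H := P ε₀ f - P (ε₀ + t) f with hu
  -- monotonicity of ‖P s g‖ in s
  have hmono : ∀ a b : ℝ, 0 ≤ a → a ≤ b → ∀ g : H, ‖P b g‖ ≤ ‖P a g‖ := by
    intro a b ha hab g
    have hb : P b g = P (b - a) (P a g) := by
      rw [hsemi (b - a) a (by linarith) ha g, sub_add_cancel]
    rw [hb]; exact hcontr _ (by linarith) _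
  -- inner products of the v_k
  have hinner : ∀ j k : ℕ, j ≤ n → k ≤ n →
      ‖P ((n : ℝ) * t) u‖ ^ 2 ≤ ⟪P ((j : ℝ) * t) u, P ((k : ℝ) * t) u⟫ := by
    intro j k hj hk
    have hjt : (0:ℝ) ≤ (j : ℝ) * t := by positivity
    have hkt : (0:ℝ) ≤ (k : ℝ) * t := by positivity
    have hm : (0:ℝ) ≤ ((j : ℝ) * t + (k : ℝ) * t) / 2 := by positivity
    have h1 : ⟪P ((j : ℝ) * t) u, P ((k : ℝ) * t) u⟫
        = ⟪u, P ((j : ℝ) * t + (k : ℝ) * t) u⟫ := by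
      rw [hsym _ hjt, hsemi _ _ hjt hkt]
    have h2 : P ((j : ℝ) * t + (k : ℝ) * t) u
        = P (((j : ℝ) * t + (k : ℝ) * t) / 2) (P (((j : ℝ) * t + (k : ℝ) * t) / 2) u) := by
      rw [hsemi _ _ hm hm]; ring_nf
    have h3 : ⟪P ((j : ℝ) * t) u, P ((k : ℝ) * t) u⟫
        = ‖P (((j : ℝ) * t + (k : ℝ) * t) / 2) u‖ ^ 2 := by
      rw [h1, h2, ← hsym _ hm, real_inner_self_eq_norm_sq]
    rw [h3]
    have hle : ((j : ℝ) * t + (k : ℝ) * t) / 2 ≤ (n : ℝ) * t := by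
      have hjn : (j : ℝ) ≤ n := Nat.cast_le.mpr hj
      have hkn : (k : ℝ) ≤ n := Nat.cast_le.mpr hk
      nlinarith [hjn, hkn, ht.le]
    have := hmono _ _ hm hle u
    have h0 : 0 ≤ ‖P ((n:ℝ) * t) u‖ := norm_nonneg _
    nlinarith
  -- telescoping sum
  set S : H := ∑ k ∈ Finset.range (n + 1), P ((k : ℝ) * t) u with hS
  have hterm : ∀ k : ℕ, P ((k : ℝ) * t) u
      = P (ε₀ + (k : ℝ) * t) f - P (ε₀ + ((k : ℝ) + 1) * t) f := by
    intro k
    have hkt : (0:ℝ) ≤ (k : ℝ) * t := by positivity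
    rw [hu, map_sub, hsemi _ _ hkt hε₀, hsemi _ _ hkt (by linarith)]
    ring_nf
  have hSeq : S = P ε₀ f - P (ε₀ + ((n : ℝ) + 1) * t) f := by
    rw [hS]
    have : ∀ k ∈ Finset.range (n + 1), P ((k : ℝ) * t) u
        = (fun k : ℕ => P (ε₀ + (k : ℝ) * t) f) k
          - (fun k : ℕ => P (ε₀ + (k : ℝ) * t) f) (k + 1) := by
      intro k _
      rw [hterm k]
      push_cast
      ring_nf
    rw [Finset.sum_congr rfl this, Finset.sum_range_sub']
    push_cast
    ring_nf
  have hSnorm : ‖S‖ ≤ 2 * ‖f‖ := by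
    rw [hSeq]
    calc ‖P ε₀ f - P (ε₀ + ((n : ℝ) + 1) * t) f‖
        ≤ ‖P ε₀ f‖ + ‖P (ε₀ + ((n : ℝ) + 1) * t) f‖ := norm_sub_le _ _
      _ ≤ ‖f‖ + ‖f‖ := by
          have hpos : (0:ℝ) ≤ ((n:ℝ) + 1) * t := by positivity
          exact add_le_add (hcontr _ hε₀ f) (hcontr _ (by linarith) f)
      _ = 2 * ‖f‖ := by ring
  -- lower bound on ‖S‖²
  have hlow : ((n : ℝ) + 1) ^ 2 * ‖P ((n : ℝ) * t) u‖ ^ 2 ≤ ‖S‖ ^ 2 := by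
    have hexp : ‖S‖ ^ 2 = ∑ j ∈ Finset.range (n + 1), ∑ k ∈ Finset.range (n + 1),
        ⟪P ((j : ℝ) * t) u, P ((k : ℝ) * t) u⟫ := by
      rw [← real_inner_self_eq_norm_sq, hS, sum_inner]
      exact Finset.sum_congr rfl fun j _ => by rw [inner_sum]
    rw [hexp]
    have hbound : ∀ j ∈ Finset.range (n + 1), ∀ k ∈ Finset.range (n + 1),
        ‖P ((n : ℝ) * t) u‖ ^ 2 ≤ ⟪P ((j : ℝ) * t) u, P ((k : ℝ) * t) u⟫ := by
      intro j hj k hk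
      exact hinner j k (Nat.lt_succ_iff.mp (Finset.mem_range.mp hj))
        (Nat.lt_succ_iff.mp (Finset.mem_range.mp hk))
    calc ((n : ℝ) + 1) ^ 2 * ‖P ((n : ℝ) * t) u‖ ^ 2
        = ∑ _j ∈ Finset.range (n + 1), ∑ _k ∈ Finset.range (n + 1),
            ‖P ((n : ℝ) * t) u‖ ^ 2 := by
          simp [Finset.sum_const, Finset.card_range]
          push_cast
          ring
      _ ≤ _ := Finset.sum_le_sum fun j hj =>
          Finset.sum_le_sum fun k hk => hbound j hj k hk
  -- identify v_n with the difference
  have hvn : ‖P (ε + t) f - P ε f‖ = ‖P ((n : ℝ) * t) u‖ := by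
    have hnt0 : (0:ℝ) ≤ (n : ℝ) * t := by positivity
    have h1 : P ((n : ℝ) * t) u = P ε f - P (ε + t) f := by
      rw [hu, map_sub, hsemi _ _ hnt0 hε₀, hsemi _ _ hnt0 (by linarith)]
      have e1 : (n : ℝ) * t + ε₀ = ε := by rw [hε₀def]; ring
      have e2 : (n : ℝ) * t + (ε₀ + t) = ε + t := by rw [hε₀def]; ring
      rw [e1, e2]
    rw [h1, norm_sub_rev]
  rw [hvn]
  -- conclude
  have hnn : (0:ℝ) ≤ ‖P ((n : ℝ) * t) u‖ := norm_nonneg _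
  have hfn : (0:ℝ) ≤ ‖f‖ := norm_nonneg _
  have hkey : ((n : ℝ) + 1) * ‖P ((n : ℝ) * t) u‖ ≤ 2 * ‖f‖ := by
    have hS0 : (0:ℝ) ≤ ‖S‖ := norm_nonneg _
    nlinarith [hlow, hSnorm]
  rw [div_mul_eq_mul_div, le_div_iff₀ hε]
  nlinarith [mul_le_mul_of_nonneg_left hkey (le_of_lt ht)]
end

section
/- Let P be a symmetric Markov operator on a probability space (Ω, μ). Then for any bounded measurable f: Ω → ℝ and any p ∈ (1,∞), (p-2)²·E|f|^p + 4(p-1)·E[φ_{p/2}(f)·P(φ_{p/2}(f))] ≥ p²·E[φ_{p-1}(f)·Pf], where φ_s(x) = sign(x)|x|^s. -/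
/-!
Pointwise,
`p² (a φ_{p-1}(b) + φ_{p-1}(a) b) ≤ (p-2)² (|a|^p + |b|^p) + 8(p-1) φ_{p/2}(a) φ_{p/2}(b)`. For `a`, `b` of equal sign this is the Stroock–Varopoulos bound
`4(p-1) (u^{p/2} - v^{p/2})² ≤ p² (u - v)(u^{p-1} - v^{p-1})` for `u, v ≥ 0`; for opposite signs it
follows from two AM-GM inequalities. Fix `a = f x`, apply the positive operator `P` in `b = f y`,
and integrate in `x`: symmetry of `P` and `P 1 = 1` turn `∫ f · P φ_{p-1}(f)` into
`∫ φ_{p-1}(f) · P f` and `∫ P |f|^p` into `∫ |f|^p`.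
-/

open MeasureTheory

theorem sq_rpow_half_sub_le {p : ℝ} (hp : 1 < p) {u v : ℝ} (hu : 0 ≤ u) (hv : 0 ≤ v) :
    4 * (p - 1) * (u ^ (p / 2) - v ^ (p / 2)) ^ 2 ≤
      p ^ 2 * ((u - v) * (u ^ (p - 1) - v ^ (p - 1))) := by
  wlog hvu : v ≤ u generalizing u v
  · convert this hv hu (le_of_not_ge hvu) using 1 <;> ring
  have hp1 : 0 < p - 1 := by linarith
  -- `F c` has derivative `(t ^ (p/2 - 1) - c) ^ 2`, so `F c u - F c v` is a nonnegative
  -- quadratic polynomial in `c`; its discriminant is the claim.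
  set F : ℝ → ℝ → ℝ := fun c t => t ^ (p - 1) / (p - 1) - 4 * c / p * t ^ (p / 2) + c ^ 2 * t
  have hF : ∀ c t, 0 < t → HasDerivAt (F c) ((t ^ (p / 2 - 1) - c) ^ 2) t := by
    intro c t ht
    have hsq : (t ^ (p / 2 - 1)) ^ 2 = t ^ (p - 2) := by
      rw [← Real.rpow_natCast, ← Real.rpow_mul ht.le]; ring_nf
    refine HasDerivAt.congr_deriv ((((Real.hasDerivAt_rpow_const (Or.inl ht.ne')).div_const
      (p - 1)).sub ((Real.hasDerivAt_rpow_const (Or.inl ht.ne')).const_mul (4 * c / p))).add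
      ((hasDerivAt_id t).const_mul (c ^ 2))) ?_
    rw [sub_sq, hsq, show p - 1 - 1 = p - 2 by ring]
    field_simp
    ring
  have hmono : ∀ c, MonotoneOn (F c) (Set.Ici 0) := by
    intro c
    refine monotoneOn_of_hasDerivWithinAt_nonneg (convex_Ici 0) (by fun_prop (disch := positivity))
      (fun t ht => (hF c t ?_).hasDerivWithinAt) fun _ _ => sq_nonneg _
    rwa [interior_Ici] at ht
  have hquad : ∀ c, 0 ≤ (u - v) * (c * c) + (-(4 / p) * (u ^ (p / 2) - v ^ (p / 2))) * c +
      (u ^ (p - 1) - v ^ (p - 1)) / (p - 1) := by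
    intro c
    have := hmono c hv hu hvu
    simp only [F] at this
    linear_combination this
  have hdisc := discrim_le_zero hquad
  rw [discrim] at hdisc
  field_simp at hdisc
  linarith

theorem two_mul_rpow_half_mul_rpow_half_le {x y p : ℝ} (hx : 0 ≤ x) (hy : 0 ≤ y) (hp : p ≠ 0)
    (a : ℝ) : 2 * (x ^ (p / 2) * y ^ (p / 2)) ≤ x ^ a * y ^ (p - a) + x ^ (p - a) * y ^ a := by
  have hsq : ∀ {z : ℝ}, 0 ≤ z → ∀ b : ℝ, (z ^ (b / 2)) ^ 2 = z ^ b := fun hz b => by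
    rw [← Real.rpow_natCast, ← Real.rpow_mul hz]; ring_nf
  have hmul : ∀ {z : ℝ}, 0 ≤ z → z ^ (a / 2) * z ^ ((p - a) / 2) = z ^ (p / 2) := fun hz => by
    rw [← Real.rpow_add' hz (by contrapose! hp; linarith)]; ring_nf
  set X := x ^ (a / 2) * y ^ ((p - a) / 2)
  set Y := x ^ ((p - a) / 2) * y ^ (a / 2)
  have hX : X ^ 2 = x ^ a * y ^ (p - a) := by rw [mul_pow, hsq hx, hsq hy]
  have hY : Y ^ 2 = x ^ (p - a) * y ^ a := by rw [mul_pow, hsq hx, hsq hy]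
  have hXY : X * Y = x ^ (p / 2) * y ^ (p / 2) := by
    rw [← hmul hx, ← hmul hy]; ring
  linear_combination sq_nonneg (X - Y) + hX + hY - 2 * hXY

theorem abs_mul_rpow_add_rpow_mul_sub_le {p : ℝ} (hp : 1 < p) {u v : ℝ} (hu : 0 ≤ u) (hv : 0 ≤ v) :
    |p ^ 2 * (u * v ^ (p - 1) + u ^ (p - 1) * v) - 8 * (p - 1) * (u ^ (p / 2) * v ^ (p / 2))| ≤
      (p - 2) ^ 2 * (u ^ p + v ^ p) := by
  have hp0 : p ≠ 0 := by linarith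
  have hmul : ∀ {z : ℝ}, 0 ≤ z → z * z ^ (p - 1) = z ^ p := fun hz => by
    rw [← Real.rpow_one_add' hz (by simpa using hp0)]; ring_nf
  have hsq : ∀ {z : ℝ}, 0 ≤ z → (z ^ (p / 2)) ^ 2 = z ^ p := fun hz => by
    rw [← Real.rpow_natCast, ← Real.rpow_mul hz]; ring_nf
  have hY : 0 ≤ u ^ (p / 2) * v ^ (p / 2) := by positivity
  have hamgm_p := two_mul_rpow_half_mul_rpow_half_le hu hv hp0 p
  have hamgm_1 := two_mul_rpow_half_mul_rpow_half_le hu hv hp0 1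
  simp only [sub_self, Real.rpow_zero, Real.rpow_one, mul_one, one_mul] at hamgm_p hamgm_1
  rw [abs_le]
  constructor
  · linear_combination
      p ^ 2 * hamgm_1 + (p - 2) ^ 2 * hamgm_p + 4 * mul_nonneg (sq_nonneg (p - 2)) hY
  · linear_combination sq_rpow_half_sub_le hp hu hv + p ^ 2 * (hmul hu + hmul hv) -
      4 * (p - 1) * (hsq hu + hsq hv)

theorem Real.sign_mul_abs (r : ℝ) : Real.sign r * |r| = r := by
  rcases lt_trichotomy r 0 with hr | rfl | hr
  · simp [Real.sign_of_neg hr, abs_of_neg hr]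
  · simp
  · simp [Real.sign_of_pos hr, abs_of_pos hr]

theorem Real.abs_sign_le_one (r : ℝ) : |Real.sign r| ≤ 1 := by
  rcases Real.sign_apply_eq r with h | h | h <;> simp [h]

theorem mul_phi_add_phi_mul_le {p : ℝ} (hp : 1 < p) (a b : ℝ) :
    p ^ 2 * (a * phi (p - 1) b + phi (p - 1) a * b) ≤
      (p - 2) ^ 2 * (|a| ^ p + |b| ^ p) + 8 * (p - 1) * (phi (p / 2) a * phi (p / 2) b) := by
  set ε := Real.sign a * Real.sign b
  have hε : |ε| ≤ 1 := by
    rw [abs_mul]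
    exact mul_le_one₀ (Real.abs_sign_le_one a) (abs_nonneg _) (Real.abs_sign_le_one b)
  have h1 : a * phi (p - 1) b + phi (p - 1) a * b =
      ε * (|a| * |b| ^ (p - 1) + |a| ^ (p - 1) * |b|) := by
    simp only [phi, ε]
    linear_combination -(Real.sign b * |b| ^ (p - 1)) * Real.sign_mul_abs a -
      (Real.sign a * |a| ^ (p - 1)) * Real.sign_mul_abs b
  have h2 : phi (p / 2) a * phi (p / 2) b = ε * (|a| ^ (p / 2) * |b| ^ (p / 2)) := by
    simp only [phi, ε]
    ring
  rw [h1, h2]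
  set D := p ^ 2 * (|a| * |b| ^ (p - 1) + |a| ^ (p - 1) * |b|) -
    8 * (p - 1) * (|a| ^ (p / 2) * |b| ^ (p / 2))
  calc _ = ε * D + 8 * (p - 1) * (ε * (|a| ^ (p / 2) * |b| ^ (p / 2))) := by ring
    _ ≤ |D| + 8 * (p - 1) * (ε * (|a| ^ (p / 2) * |b| ^ (p / 2))) := by
        gcongr
        exact (le_abs_self _).trans (by rw [abs_mul]; exact mul_le_of_le_one_left (abs_nonneg _) hε)
    _ ≤ _ := by gcongr; exact abs_mul_rpow_add_rpow_mul_sub_le hp (abs_nonneg a) (abs_nonneg b)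

theorem Real.measurable_sign : Measurable Real.sign :=
  Measurable.ite (measurableSet_lt measurable_id measurable_const) measurable_const
    (Measurable.ite (measurableSet_lt measurable_const measurable_id) measurable_const
      measurable_const)

theorem measurable_phi (s : ℝ) : Measurable (phi s) :=
  Real.measurable_sign.mul (measurable_abs.pow_const s)

theorem abs_phi_le_s14 {s a C : ℝ} (hs : 0 ≤ s) (ha : |a| ≤ C) : |phi s a| ≤ C ^ s := by
  rw [phi, abs_mul, abs_of_nonneg (Real.rpow_nonneg (abs_nonneg a) s)]
  calc |Real.sign a| * |a| ^ s ≤ 1 * |a| ^ s := by gcongr; exact Real.abs_sign_le_one a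
    _ ≤ C ^ s := by rw [one_mul]; exact Real.rpow_le_rpow (abs_nonneg a) ha hs

section Integrability

variable {Ω : Type*} [MeasurableSpace Ω] {μ : Measure Ω} [IsFiniteMeasure μ]

theorem integrable_of_abs_le {g : Ω → ℝ} (hg : Measurable g) {C : ℝ} (hC : ∀ x, |g x| ≤ C) :
    Integrable g μ :=
  .of_bound hg.aestronglyMeasurable C (ae_of_all _ hC)

theorem integrable_mul_of_abs_le {g h : Ω → ℝ} (hg : Measurable g) (hh : Measurable h)
    {C D : ℝ} (hC : ∀ x, |g x| ≤ C) (hD : ∀ x, |h x| ≤ D) : Integrable (fun x => g x * h x) μ :=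
  (integrable_of_abs_le hh hD).bdd_mul hg.aestronglyMeasurable (ae_of_all _ hC)

end Integrability

namespace MarkovOperator

variable {Ω : Type*} {P : (Ω → ℝ) →ₗ[ℝ] (Ω → ℝ)}

theorem apply_const (hone : P (fun _ => 1) = fun _ => 1) (c : ℝ) :
    P (fun _ => c) = fun _ => c := by
  rw [show (fun _ => c) = c • fun _ : Ω => (1 : ℝ) by ext; simp, map_smul, hone]

theorem apply_mono (hpos : ∀ f : Ω → ℝ, (∀ x, 0 ≤ f x) → ∀ x, 0 ≤ P f x) {g h : Ω → ℝ}
    (hgh : ∀ x, g x ≤ h x) (x : Ω) : P g x ≤ P h x := by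
  simpa using hpos (h - g) (fun y => sub_nonneg.mpr (hgh y)) x

theorem abs_apply_le (hone : P (fun _ => 1) = fun _ => 1)
    (hpos : ∀ f : Ω → ℝ, (∀ x, 0 ≤ f x) → ∀ x, 0 ≤ P f x) {g : Ω → ℝ} {C : ℝ}
    (hg : ∀ x, |g x| ≤ C) (x : Ω) : |P g x| ≤ C := by
  have hlow := apply_mono hpos (g := fun _ => -C) (fun y => (abs_le.mp (hg y)).1) x
  have hupp := apply_mono hpos (h := fun _ => C) (fun y => (abs_le.mp (hg y)).2) x
  rw [apply_const hone] at hlow hupp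
  exact abs_le.mpr ⟨hlow, hupp⟩

theorem mul_apply_phi_add_phi_mul_apply_le (hone : P (fun _ => 1) = fun _ => 1)
    (hpos : ∀ f : Ω → ℝ, (∀ x, 0 ≤ f x) → ∀ x, 0 ≤ P f x) {p : ℝ} (hp : 1 < p) (f : Ω → ℝ)
    (x : Ω) :
    p ^ 2 * (f x * P (fun y => phi (p - 1) (f y)) x + phi (p - 1) (f x) * P f x) ≤
      (p - 2) ^ 2 * (|f x| ^ p + P (fun y => |f y| ^ p) x) +
        8 * (p - 1) * (phi (p / 2) (f x) * P (fun y => phi (p / 2) (f y)) x) := by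
  have hlhs : (fun y => p ^ 2 * (f x * phi (p - 1) (f y) + phi (p - 1) (f x) * f y)) =
      (p ^ 2 * f x) • (fun y => phi (p - 1) (f y)) + (p ^ 2 * phi (p - 1) (f x)) • f := by
    ext; simp only [Pi.add_apply, Pi.smul_apply, smul_eq_mul]; ring
  have hrhs : (fun y => (p - 2) ^ 2 * (|f x| ^ p + |f y| ^ p) +
        8 * (p - 1) * (phi (p / 2) (f x) * phi (p / 2) (f y))) =
      ((p - 2) ^ 2 * |f x| ^ p) • (fun _ => 1) + (p - 2) ^ 2 • (fun y => |f y| ^ p) +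
        (8 * (p - 1) * phi (p / 2) (f x)) • (fun y => phi (p / 2) (f y)) := by
    ext; simp only [Pi.add_apply, Pi.smul_apply, smul_eq_mul]; ring
  have h := apply_mono hpos (fun y => mul_phi_add_phi_mul_le hp (f x) (f y)) x
  simp only [hlhs, hrhs, map_add, map_smul, hone, Pi.add_apply, Pi.smul_apply, smul_eq_mul] at h
  linear_combination h

theorem integrable_mul_apply [MeasurableSpace Ω] {μ : Measure Ω} [IsFiniteMeasure μ]
    (hone : P (fun _ => 1) = fun _ => 1)
    (hpos : ∀ f : Ω → ℝ, (∀ x, 0 ≤ f x) → ∀ x, 0 ≤ P f x)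
    (hmeas : ∀ f : Ω → ℝ, Measurable f → Measurable (P f)) {u w : Ω → ℝ} (hu : Measurable u)
    (hw : Measurable w) {C D : ℝ} (hC : ∀ x, |u x| ≤ C) (hD : ∀ x, |w x| ≤ D) :
    Integrable (fun x => u x * P w x) μ :=
  integrable_mul_of_abs_le hu (hmeas w hw) hC (abs_apply_le hone hpos hD)

end MarkovOperator

theorem stmt_14 {Ω : Type*} [MeasurableSpace Ω] (μ : Measure Ω) [IsProbabilityMeasure μ]
    (P : (Ω → ℝ) →ₗ[ℝ] (Ω → ℝ))
    -- P is a symmetric Markov operator: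
    (hone : P (fun _ => 1) = fun _ => 1)
    (hpos : ∀ f : Ω → ℝ, (∀ x, 0 ≤ f x) → ∀ x, 0 ≤ P f x)
    (hmeas : ∀ f : Ω → ℝ, Measurable f → Measurable (P f))
    (hsym : ∀ f g : Ω → ℝ, ∫ x, f x * P g x ∂μ = ∫ x, g x * P f x ∂μ)
    (p : ℝ) (hp : 1 < p)
    (f : Ω → ℝ) (hf : Measurable f) (M : ℝ) (hbdd : ∀ x, |f x| ≤ M) :
    p ^ 2 * ∫ x, phi (p - 1) (f x) * P f x ∂μ ≤
      (p - 2) ^ 2 * ∫ x, |f x| ^ p ∂μ +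
        4 * (p - 1) * ∫ x, phi (p / 2) (f x) * P (fun y => phi (p / 2) (f y)) x ∂μ := by
  set g := fun y => phi (p - 1) (f y)
  set h := fun y => phi (p / 2) (f y)
  set q := fun y => |f y| ^ p
  have hgm : Measurable g := (measurable_phi _).comp hf
  have hhm : Measurable h := (measurable_phi _).comp hf
  have hqm : Measurable q := (measurable_abs.pow_const p).comp hf
  have hg : ∀ x, |g x| ≤ M ^ (p - 1) := fun x => abs_phi_le_s14 (by linarith) (hbdd x)
  have hh : ∀ x, |h x| ≤ M ^ (p / 2) := fun x => abs_phi_le_s14 (by linarith) (hbdd x)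
  have hq : ∀ x, |q x| ≤ M ^ p := fun x => (abs_of_nonneg (by positivity)).trans_le
    (Real.rpow_le_rpow (abs_nonneg _) (hbdd x) (by linarith))
  have i1 := MarkovOperator.integrable_mul_apply (μ := μ) hone hpos hmeas hf hgm hbdd hg
  have i2 := MarkovOperator.integrable_mul_apply (μ := μ) hone hpos hmeas hgm hf hg hbdd
  have i3 : Integrable q μ := integrable_of_abs_le hqm hq
  have i4 : Integrable (P q) μ :=
    integrable_of_abs_le (hmeas q hqm) (MarkovOperator.abs_apply_le hone hpos hq)
  have i5 := MarkovOperator.integrable_mul_apply (μ := μ) hone hpos hmeas hhm hhm hh hh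
  have i34 : Integrable (fun x => q x + P q x) μ := i3.add i4
  have hint : ∫ x, p ^ 2 * (f x * P g x + g x * P f x) ∂μ ≤
      ∫ x, (p - 2) ^ 2 * (q x + P q x) + 8 * (p - 1) * (h x * P h x) ∂μ :=
    integral_mono ((i1.add i2).const_mul _) ((i34.const_mul _).add (i5.const_mul _))
      (MarkovOperator.mul_apply_phi_add_phi_mul_apply_le hone hpos hp f)
  rw [integral_add (i34.const_mul _) (i5.const_mul _), integral_const_mul, integral_const_mul,
    integral_const_mul, integral_add i1 i2, integral_add i3 i4] at hint
  have hPq : ∫ x, P q x ∂μ = ∫ x, q x ∂μ := by simpa [hone] using hsym (fun _ => 1) q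
  rw [hsym f g, hPq] at hint
  linarith
end
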